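/- arXiv:1707.03854 — 2 statements merged into one kernel-verified Lean document; each statement's English description precedes it below -/
import Mathlib

section
/- Variance bound (Lemma 2): In the Poissonized multi-population model, if t_1 = max_j t_j ≥ 1, then the weighted estimator Û^W with Poisson rate r > 0 satisfies Var(Û^W − U) ≤ (∑_{j=1}^m n_j) · e^{2r(t_1 − 1)} + ∑_{j=1}^m n_j t_j. -/
open MeasureTheory ProbabilityTheory Real Finset
open scoped NNReal

noncomputable section

/-- Index type for the Poisson counts: `Sum.inl (x, j)` indexes the period-one count
`N_{x,j}`, and `Sum.inr (x, j)` indexes the period-two count `N'_{x,j}`. -/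
abbrev Idx (X : Type*) (m : ℕ) := (X × Fin m) ⊕ (X × Fin m)

/-- Joint law of the mutually independent Poisson counts: `N_{x,j} ~ Poisson(λ_{x,j})`
and `N'_{x,j} ~ Poisson(t_j · λ_{x,j})`, where `λ_{x,j} = lam x j`. -/
noncomputable def jointLaw (X : Type*) [Fintype X] (m : ℕ) (lam : X → Fin m → ℝ≥0)
    (t : Fin m → ℝ≥0) : Measure (Idx X m → ℕ) :=
  Measure.pi fun idx =>
    poissonMeasure (Sum.elim (fun q => lam q.1 q.2) (fun q => t q.2 * lam q.1 q.2) idx)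

/-- The number of new elements `U`: elements unseen in period one and seen in period two. -/
def numNew {X : Type*} {m : ℕ} (ω : Idx X m → ℕ) : ℝ :=
  (Set.ncard {x : X | (∀ j, ω (Sum.inl (x, j)) = 0) ∧ (∃ j, ω (Sum.inr (x, j)) ≠ 0)} : ℝ)

/-- Fingerprint entry `φ_{i_1,...,i_m}`: the number of domain elements observed exactly
`i j` times in population `j` during period one. -/
def fingerprint {X : Type*} {m : ℕ} (ω : Idx X m → ℕ) (i : Fin m → ℕ) : ℝ :=
  (Set.ncard {x : X | ∀ j, ω (Sum.inl (x, j)) = i j} : ℝ)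

/-- The Poisson tail weight `W(i_1,...,i_m) = P(L ≥ ∑_{j ∈ A} i_j)` where `L ~ Poisson(r)`
and `A = {j : t_j > 1}`. -/
noncomputable def Wpoi {m : ℕ} (r : ℝ) (t : Fin m → ℝ≥0) (i : Fin m → ℕ) : ℝ :=
  (poissonMeasure r.toNNReal
    {k : ℕ | ∑ j ∈ Finset.univ.filter (fun j => 1 < t j), i j ≤ k}).toReal

/-- The weighted linear estimator `Û^W`. -/
noncomputable def UhatW {X : Type*} {m : ℕ} (r : ℝ) (t : Fin m → ℝ≥0)
    (ω : Idx X m → ℕ) : ℝ :=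
  -∑' i : {i : Fin m → ℕ // i ≠ 0},
    (∏ j, (-(t j : ℝ)) ^ (i.1 j)) * Wpoi r t i.1 * fingerprint ω i.1

/-! Û^W − U is a sum over the domain of terms each depending only on the counts of one element
`x`; these terms are independent, so the variance is at most the sum of their second moments.
The term of `x` vanishes if `x` is unseen in both periods and is `-1` if `x` is seen only in
period two. If `x` has period-one counts `i ≠ 0` it is `-(∏ⱼ (-tⱼ)^{iⱼ}) W(i)`, and with
`S = ∑_{j ∈ A} iⱼ` its absolute value is at most `t₁^S P(L ≥ S) ≤ E[t₁^L] = e^{r(t₁-1)}`.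
So the second moment of the term of `x` is at most
`e^{2r(t₁-1)} P(x seen in period one) + P(x seen in period two)
  ≤ e^{2r(t₁-1)} ∑ⱼ λ_{x,j} + ∑ⱼ tⱼ λ_{x,j}`,
and summing over `x` with `∑ₓ λ_{x,j} = nⱼ` gives the bound. -/

lemma integrable_pow_poissonMeasure (r : ℝ≥0) (c : ℝ) :
    Integrable (fun k : ℕ => c ^ k) (poissonMeasure r) := by
  refine integrable_poissonMeasure_iff.2 <|
    ((Real.summable_pow_div_factorial (r * |c|)).mul_left (exp (-r))).congr fun k => ?_
  rw [norm_pow, norm_eq_abs, mul_pow]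
  ring

lemma integral_pow_poissonMeasure (r : ℝ≥0) (c : ℝ) :
    ∫ k, c ^ k ∂poissonMeasure r = exp (r * (c - 1)) := by
  rw [integral_poissonMeasure, mul_sub, mul_one, sub_eq_neg_add, exp_add, exp_eq_exp_ℝ,
    ← (NormedSpace.expSeries_div_hasSum_exp ((r : ℝ) * c)).tsum_eq, ← tsum_mul_left]
  congr 1 with k
  rw [smul_eq_mul, mul_pow]
  ring

lemma pow_mul_poissonMeasure_real_tail_le (r : ℝ≥0) {c : ℝ} (hc : 1 ≤ c) (S : ℕ) :
    c ^ S * (poissonMeasure r).real {k | S ≤ k} ≤ exp (r * (c - 1)) := by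
  rw [← integral_pow_poissonMeasure, mul_comm, ← smul_eq_mul,
    ← integral_indicator_const _ .of_discrete]
  refine integral_mono ((integrable_const _).indicator .of_discrete)
    (integrable_pow_poissonMeasure r c) fun k => ?_
  by_cases hk : S ≤ k
  · simpa [hk] using pow_le_pow_right₀ hc hk
  · simp [hk, pow_nonneg (zero_le_one.trans hc)]

lemma poissonMeasure_real_compl_zero_le (r : ℝ≥0) : (poissonMeasure r).real {0}ᶜ ≤ r := by
  rw [probReal_compl_eq_one_sub (measurableSet_singleton 0), poissonMeasure_real_singleton]
  simpa using add_one_le_exp (-(r : ℝ))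

section MeasurePi

variable {ι κ : Type*} [Fintype ι]

lemma pi_poissonMeasure_real_comp_ne_zero_le [Fintype κ] (ρ : ι → ℝ≥0) (e : κ → ι) :
    (Measure.pi fun i => poissonMeasure (ρ i)).real {ω | ω ∘ e ≠ 0} ≤ ∑ k, (ρ (e k) : ℝ) := by
  have hunion : {ω : ι → ℕ | ω ∘ e ≠ 0} = ⋃ k, (fun ω => ω (e k)) ⁻¹' {0}ᶜ := by
    ext ω
    simp [Function.ne_iff]
  rw [hunion]
  refine (measureReal_iUnion_fintype_le _).trans (sum_le_sum fun k _ => ?_)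
  rw [← map_measureReal_apply (measurable_pi_apply _) (measurableSet_singleton 0).compl,
    (measurePreserving_eval _ (e k)).map_eq]
  exact poissonMeasure_real_compl_zero_le _

lemma indepFun_comp_pi_of_disjoint_range {κ' β γ γ' : Type*} [Fintype κ] [Fintype κ']
    [MeasurableSpace β] [MeasurableSpace γ] [MeasurableSpace γ'] {μ : ι → Measure β}
    [∀ i, IsProbabilityMeasure (μ i)] {e : κ → ι} {e' : κ' → ι}
    (he : Disjoint (Set.range e) (Set.range e')) {F : (κ → β) → γ} {G : (κ' → β) → γ'}
    (hF : Measurable F) (hG : Measurable G) :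
    IndepFun (fun ω => F (ω ∘ e)) (fun ω => G (ω ∘ e')) (Measure.pi μ) := by
  classical
  have hST : Disjoint (univ.image e) (univ.image e') := by
    rw [← disjoint_coe]
    simpa using he
  have hcoord := (iIndepFun_pi (μ := μ) (X := fun _ => id) fun _ => aemeasurable_id).indepFun_finset
    _ _ hST fun i => measurable_pi_apply i
  exact hcoord.comp (φ := fun v => F fun k => v ⟨e k, mem_image_of_mem e (mem_univ k)⟩)
    (ψ := fun v => G fun k => v ⟨e' k, mem_image_of_mem e' (mem_univ k)⟩)
    (hF.comp (measurable_pi_lambda _ fun k => measurable_pi_apply _))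
    (hG.comp (measurable_pi_lambda _ fun k => measurable_pi_apply _))

end MeasurePi

lemma prod_pow_le_pow_sum_filter_one_lt {ι : Type*} [Fintype ι] (t : ι → ℝ≥0) {c : ℝ≥0}
    (ht : ∀ j, t j ≤ c) (a : ι → ℕ) :
    ∏ j, t j ^ a j ≤ c ^ ∑ j ∈ univ.filter (fun j => 1 < t j), a j := by
  rw [← prod_filter_mul_prod_filter_not univ (fun j => 1 < t j), ← prod_pow_eq_pow_sum]
  calc (∏ j ∈ univ.filter (fun j => 1 < t j), t j ^ a j) *
        ∏ j ∈ univ.filter (fun j => ¬1 < t j), t j ^ a j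
      ≤ (∏ j ∈ univ.filter (fun j => 1 < t j), c ^ a j) * 1 := by
        gcongr with j hj j hj
        · exact ht j
        · exact prod_le_one' fun j hj => pow_le_one' (not_lt.1 (mem_filter.1 hj).2) _
    _ = _ := mul_one _

section Estimator

variable {m : ℕ} (r : ℝ) (t : Fin m → ℝ≥0)

def estimatorCoeff (i : Fin m → ℕ) : ℝ := (∏ j, (-(t j : ℝ)) ^ i j) * Wpoi r t i

variable {r t}

lemma abs_estimatorCoeff_le (hr : 0 ≤ r) {c : ℝ≥0} (ht : ∀ j, t j ≤ c) (hc : 1 ≤ c)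
    (i : Fin m → ℕ) : |estimatorCoeff r t i| ≤ exp (r * (c - 1)) := by
  have hprod : |∏ j, (-(t j : ℝ)) ^ i j| = ((∏ j, t j ^ i j : ℝ≥0) : ℝ) := by
    simp [abs_prod]
  have hW : 0 ≤ Wpoi r t i := ENNReal.toReal_nonneg
  rw [estimatorCoeff, abs_mul, hprod, abs_of_nonneg hW]
  calc _ ≤ (c : ℝ) ^ (∑ j ∈ univ.filter (fun j => 1 < t j), i j) * Wpoi r t i := by
        gcongr
        exact_mod_cast prod_pow_le_pow_sum_filter_one_lt t ht i
    _ ≤ exp (r.toNNReal * (c - 1)) := pow_mul_poissonMeasure_real_tail_le _ (by exact_mod_cast hc) _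
    _ = _ := by rw [coe_toNNReal r hr]

end Estimator

lemma tsum_subtype_mul_card_fiber {α β : Type*} [Fintype β] [DecidableEq α] (s : Set α)
    (f : α → ℝ) (a : β → α) :
    ∑' i : s, f i * #{x | a x = i} = ∑ x, s.indicator f (a x) := by
  rw [tsum_subtype s (fun i => f i * #{x | a x = i}), sum_comp (s.indicator f) a]
  refine (tsum_eq_sum fun i hi => ?_).trans (sum_congr rfl fun i _ => ?_)
  · rw [Set.indicator_mul_left, card_eq_zero.2, Nat.cast_zero, mul_zero]
    exact filter_eq_empty_iff.2 fun x _ hx => hi (hx ▸ mem_image_of_mem a (mem_univ x))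
  · rw [Set.indicator_mul_left, nsmul_eq_mul, mul_comm]

section Decomposition

variable {X : Type*} [Fintype X] {m : ℕ}

def firstCounts (ω : Idx X m → ℕ) (x : X) : Fin m → ℕ := fun j => ω (Sum.inl (x, j))

def secondCounts (ω : Idx X m → ℕ) (x : X) : Fin m → ℕ := fun j => ω (Sum.inr (x, j))

lemma fingerprint_eq_card (ω : Idx X m → ℕ) (i : Fin m → ℕ) :
    fingerprint ω i = #{x | firstCounts ω x = i} := by
  rw [fingerprint, ← Set.ncard_coe_finset]
  congr
  ext x
  simp [firstCounts, funext_iff]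

lemma numNew_eq_sum (ω : Idx X m → ℕ) :
    numNew ω = ∑ x, if firstCounts ω x = 0 ∧ secondCounts ω x ≠ 0 then 1 else 0 := by
  rw [numNew, ← natCast_card_filter, ← Set.ncard_coe_finset]
  congr
  ext x
  simp [firstCounts, secondCounts, funext_iff]

lemma uhatW_eq_neg_sum (r : ℝ) (t : Fin m → ℝ≥0) (ω : Idx X m → ℕ) :
    UhatW r t ω = -∑ x, ({0}ᶜ : Set (Fin m → ℕ)).indicator (estimatorCoeff r t)
      (firstCounts ω x) := by
  simp only [UhatW, fingerprint_eq_card]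
  exact congrArg Neg.neg (tsum_subtype_mul_card_fiber {0}ᶜ (estimatorCoeff r t) (firstCounts ω))

end Decomposition

section ElementTerm

variable {m : ℕ} (r : ℝ) (t : Fin m → ℝ≥0)

def elementTerm (a b : Fin m → ℕ) : ℝ :=
  if a = 0 then (if b = 0 then 0 else -1) else -estimatorCoeff r t a

lemma uhatW_sub_numNew_eq_sum {X : Type*} [Fintype X] (ω : Idx X m → ℕ) :
    UhatW r t ω - numNew ω =
      ∑ x, elementTerm r t (firstCounts ω x) (secondCounts ω x) := by
  rw [uhatW_eq_neg_sum, numNew_eq_sum, ← sum_neg_distrib, ← sum_sub_distrib]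
  refine sum_congr rfl fun x _ => ?_
  by_cases ha : firstCounts ω x = 0 <;> by_cases hb : secondCounts ω x = 0 <;>
    simp [elementTerm, ha, hb]

variable {r t}

lemma abs_elementTerm_le (hr : 0 ≤ r) {c : ℝ≥0} (ht : ∀ j, t j ≤ c) (hc : 1 ≤ c)
    (a b : Fin m → ℕ) :
    |elementTerm r t a b| ≤ exp (r * (c - 1)) + 1 := by
  have hcoef := abs_estimatorCoeff_le hr ht hc a
  unfold elementTerm
  split_ifs <;> simp <;> linarith [exp_pos (r * (c - 1))]

lemma elementTerm_sq_le (hr : 0 ≤ r) {c : ℝ≥0} (ht : ∀ j, t j ≤ c) (hc : 1 ≤ c)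
    (a b : Fin m → ℕ) :
    elementTerm r t a b ^ 2 ≤
      exp (2 * r * (c - 1)) * (if a ≠ 0 then 1 else 0) + if b ≠ 0 then 1 else 0 := by
  have hcoef : estimatorCoeff r t a ^ 2 ≤ exp (2 * r * (c - 1)) := by
    rw [← sq_abs, show 2 * r * (c - 1) = r * (c - 1) + r * (c - 1) by ring, exp_add, ← sq]
    exact pow_le_pow_left₀ (abs_nonneg _) (abs_estimatorCoeff_le hr ht hc a) 2
  unfold elementTerm
  split_ifs <;> simp <;> linarith [exp_pos (2 * r * (c - 1))]

end ElementTerm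

section JointLaw

variable {X : Type*} [Fintype X] {m : ℕ} (lam : X → Fin m → ℝ≥0) (t : Fin m → ℝ≥0)

instance isProbabilityMeasure_jointLaw : IsProbabilityMeasure (jointLaw X m lam t) := by
  unfold jointLaw
  infer_instance

lemma indepFun_counts {x y : X} (hxy : x ≠ y) :
    IndepFun (fun ω => (firstCounts ω x, secondCounts ω x))
      (fun ω => (firstCounts ω y, secondCounts ω y)) (jointLaw X m lam t) := by
  have hdisj : Disjoint (Set.range (Sum.map (Prod.mk x) (Prod.mk x) : Fin m ⊕ Fin m → _))
      (Set.range (Sum.map (Prod.mk y) (Prod.mk y))) := by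
    rw [Set.disjoint_range_iff]
    rintro (i | i) (j | j) <;> simp [hxy]
  exact indepFun_comp_pi_of_disjoint_range hdisj (F := fun v => (v ∘ Sum.inl, v ∘ Sum.inr))
    (G := fun v => (v ∘ Sum.inl, v ∘ Sum.inr)) (measurable_of_countable _)
    (measurable_of_countable _)

variable {lam t} {r : ℝ}

lemma memLp_elementTerm (hr : 0 ≤ r) {c : ℝ≥0} (ht : ∀ j, t j ≤ c) (hc : 1 ≤ c) (x : X) :
    MemLp (fun ω => elementTerm r t (firstCounts ω x) (secondCounts ω x)) 2
      (jointLaw X m lam t) :=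
  .of_bound (measurable_of_countable _).aestronglyMeasurable _
    (ae_of_all _ fun _ => abs_elementTerm_le hr ht hc _ _)

lemma variance_elementTerm_le (hr : 0 ≤ r) {c : ℝ≥0} (ht : ∀ j, t j ≤ c) (hc : 1 ≤ c) (x : X) :
    variance (fun ω => elementTerm r t (firstCounts ω x) (secondCounts ω x)) (jointLaw X m lam t)
      ≤ exp (2 * r * (c - 1)) * ∑ j, (lam x j : ℝ) + ∑ j, (t j : ℝ) * lam x j := by
  set μ := jointLaw X m lam t
  set A := {ω : Idx X m → ℕ | firstCounts ω x ≠ 0}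
  set B := {ω : Idx X m → ℕ | secondCounts ω x ≠ 0}
  have hsq (ω : Idx X m → ℕ) : elementTerm r t (firstCounts ω x) (secondCounts ω x) ^ 2 ≤
      exp (2 * r * (c - 1)) * A.indicator 1 ω + B.indicator 1 ω := by
    simpa [A, B, Set.indicator_apply] using elementTerm_sq_le hr ht hc _ _
  have hA : μ.real A ≤ ∑ j, (lam x j : ℝ) :=
    pi_poissonMeasure_real_comp_ne_zero_le _ fun j => Sum.inl (x, j)
  have hB : μ.real B ≤ ∑ j, (t j : ℝ) * lam x j :=
    (pi_poissonMeasure_real_comp_ne_zero_le _ fun j => Sum.inr (x, j)).trans_eq (by simp)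
  have hAi : Integrable (fun ω => exp (2 * r * (c - 1)) * A.indicator 1 ω) μ :=
    ((integrable_const 1).indicator .of_discrete).const_mul _
  have hBi : Integrable (B.indicator (1 : (Idx X m → ℕ) → ℝ)) μ :=
    (integrable_const 1).indicator .of_discrete
  calc _ ≤ ∫ ω, elementTerm r t (firstCounts ω x) (secondCounts ω x) ^ 2 ∂μ :=
        variance_le_expectation_sq (measurable_of_countable _).aestronglyMeasurable
    _ ≤ ∫ ω, exp (2 * r * (c - 1)) * A.indicator 1 ω + B.indicator 1 ω ∂μ :=
        integral_mono_of_nonneg (ae_of_all _ fun ω => sq_nonneg _) (hAi.add hBi) (ae_of_all _ hsq)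
    _ = exp (2 * r * (c - 1)) * μ.real A + μ.real B := by
        rw [integral_add hAi hBi, integral_const_mul, integral_indicator_one .of_discrete,
          integral_indicator_one .of_discrete]
    _ ≤ _ := by gcongr

end JointLaw

theorem uhatW_variance_bound_general {X : Type*} [Fintype X] {m : ℕ}
    (p : X → Fin m → ℝ≥0) (hp : ∀ j, ∑ x, p x j = 1)
    (n : Fin m → ℝ≥0) (t : Fin m → ℝ≥0)
    (j₁ : Fin m) (hmax : ∀ j, t j ≤ t j₁) (h1 : 1 ≤ t j₁)
    (r : ℝ) (hr : 0 < r) :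
    variance (fun ω => UhatW r t ω - numNew ω) (jointLaw X m (fun x j => n j * p x j) t)
      ≤ (∑ j, (n j : ℝ)) * Real.exp (2 * r * ((t j₁ : ℝ) - 1))
          + ∑ j, (n j : ℝ) * (t j : ℝ) := by
  set g : X → (Idx X m → ℕ) → ℝ := fun x ω =>
    elementTerm r t (firstCounts ω x) (secondCounts ω x)
  have hdecomp : (fun ω => UhatW r t ω - numNew ω) = ∑ x, g x := by
    ext ω
    rw [uhatW_sub_numNew_eq_sum, Finset.sum_apply]
  have hindep : Set.Pairwise ↑(univ : Finset X) fun x y =>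
      IndepFun (g x) (g y) (jointLaw X m (fun x j => n j * p x j) t) := fun x _ y _ hxy =>
    (indepFun_counts _ t hxy).comp (measurable_of_countable (Function.uncurry (elementTerm r t)))
      (measurable_of_countable (Function.uncurry (elementTerm r t)))
  have hrate : ∑ x, ∑ j, ((n j * p x j : ℝ≥0) : ℝ) = ∑ j, (n j : ℝ) := by
    rw [sum_comm]
    exact sum_congr rfl fun j _ => by rw [← NNReal.coe_sum, ← mul_sum, hp j, mul_one]
  have hrate' : ∑ x, ∑ j, (t j : ℝ) * (n j * p x j : ℝ≥0) = ∑ j, (n j : ℝ) * t j := by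
    rw [sum_comm]
    exact sum_congr rfl fun j _ => by
      rw [← mul_sum, ← NNReal.coe_sum, ← mul_sum, hp j, mul_one, mul_comm]
  rw [hdecomp, IndepFun.variance_sum (fun x _ => memLp_elementTerm hr.le hmax h1 x) hindep]
  calc _ ≤ ∑ x, (exp (2 * r * (t j₁ - 1)) * ∑ j, ((n j * p x j : ℝ≥0) : ℝ) +
          ∑ j, (t j : ℝ) * (n j * p x j : ℝ≥0)) :=
        sum_le_sum fun x _ => variance_elementTerm_le hr.le hmax h1 x
    _ = _ := by rw [sum_add_distrib, ← mul_sum, hrate, hrate', mul_comm]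

/-- **Variance bound (Lemma 2)**: if `t_{j₁} = max_j t_j ≥ 1`, then
`Var(Û^W − U) ≤ (∑_j n_j) e^{2r(t_{j₁}−1)} + ∑_j n_j t_j`. -/
theorem uhatW_variance_bound {X : Type*} [Fintype X] {m : ℕ}
    (p : X → Fin m → ℝ≥0) (hp : ∀ j, ∑ x, p x j = 1)
    (n : Fin m → ℝ≥0) (hn : ∀ j, 0 < n j) (t : Fin m → ℝ≥0)
    (j₁ : Fin m) (hmax : ∀ j, t j ≤ t j₁) (h1 : 1 ≤ t j₁)
    (r : ℝ) (hr : 0 < r) :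
    variance (fun ω => UhatW r t ω - numNew ω) (jointLaw X m (fun x j => n j * p x j) t)
      ≤ (∑ j, (n j : ℝ)) * Real.exp (2 * r * ((t j₁ : ℝ) - 1))
          + ∑ j, (n j : ℝ) * (t j : ℝ) :=
  uhatW_variance_bound_general p hp n t j₁ hmax h1 r hr

end
end

section
/- Smoothed alternating-series approximation to the exponential: For every y > 0 and every r > 0, if L ~ Poisson(r), then |−∑_{i=0}^∞ (P(L ≥ i)/i!)(−y)^i + e^{−y}| ≤ e^{−r} (1 − e^{−y}). -/
/-!
Write `P(L ≥ i) = ∑_{k ≥ i} p_k` with `p_k = e^{-r} r^k / k!` and swap the two sums: the quantity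
inside the absolute value becomes `∑_k p_k R_k(y)`, where `R_k(y) = e^{-y} - ∑_{i ≤ k} (-y)^i / i!`
is the Taylor remainder of `e^{-y}`. Its integral form
`R_k(y) = (-1)^{k+1} / k! ∫_0^y (y - t)^k e^{-t} dt` turns the sum into
`-e^{-r} ∫_0^y e^{-t} J(r (y - t)) dt` with `J(x) = ∑_k (-x)^k / (k!)^2 = J₀(2√x)`, and `|J₀| ≤ 1`
(Bessel's integral) leaves `e^{-r} ∫_0^y e^{-t} dt = e^{-r} (1 - e^{-y})`.
-/

open MeasureTheory ProbabilityTheory Real Finset Nat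
open scoped NNReal

theorem intervalIntegral.hasSum_integral_of_summable_bound {ι E : Type*} [Countable ι]
    [NormedAddCommGroup E] [NormedSpace ℝ E] {F : ι → ℝ → E} {f : ℝ → E} {a b : ℝ} {C : ι → ℝ}
    (hF : ∀ n, Continuous (F n)) (hC : Summable C) (hFC : ∀ n, ∀ t ∈ Set.uIoc a b, ‖F n t‖ ≤ C n)
    (hf : ∀ t ∈ Set.uIoc a b, HasSum (fun n => F n t) (f t)) :
    HasSum (fun n => ∫ t in a..b, F n t) (∫ t in a..b, f t) :=
  intervalIntegral.hasSum_integral_of_dominated_convergence (fun n _ => C n)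
    (fun n => (hF n).aestronglyMeasurable) (fun n => ae_of_all _ (hFC n))
    (ae_of_all _ fun _ _ => hC) intervalIntegrable_const (ae_of_all _ hf)

theorem prod_range_two_mul_add_one_div_eq_factorial (m : ℕ) :
    ∏ i ∈ range m, (2 * (i : ℝ) + 1) / (2 * i + 2) = (2 * m)! / (4 ^ m * (m ! : ℝ) ^ 2) := by
  induction m with
  | zero => simp
  | succ k ih =>
    rw [prod_range_succ, ih, show 2 * (k + 1) = 2 * k + 1 + 1 by ring]
    simp only [factorial_succ]
    push_cast
    field_simp
    ring

theorem hasSum_integral_cos_mul_sin (z : ℝ) :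
    HasSum (fun m : ℕ => π * ((-(z ^ 2 / 4)) ^ m / (m ! : ℝ) ^ 2))
      (∫ θ in 0..π, cos (z * sin θ)) := by
  have hterm (m : ℕ) : ∫ θ in 0..π, (-1) ^ m * (z * sin θ) ^ (2 * m) / (2 * m)! =
      π * ((-(z ^ 2 / 4)) ^ m / (m ! : ℝ) ^ 2) := by
    have h (θ : ℝ) : (-1) ^ m * (z * sin θ) ^ (2 * m) / (2 * m)! =
        (-1) ^ m * z ^ (2 * m) / (2 * m)! * sin θ ^ (2 * m) := by ring
    simp_rw [h, intervalIntegral.integral_const_mul, integral_sin_pow_even,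
      prod_range_two_mul_add_one_div_eq_factorial, pow_mul, neg_pow (z ^ 2 / 4), div_pow]
    field_simp
  simp_rw [← hterm]
  refine intervalIntegral.hasSum_integral_of_summable_bound (C := fun m => z ^ (2 * m) / (2 * m)!)
    (fun m => by fun_prop) ?_ (fun m θ _ => ?_) (fun θ _ => Real.hasSum_cos _)
  · exact (Real.summable_pow_div_factorial z).comp_injective (mul_right_injective₀ two_ne_zero)
  · rw [norm_div, norm_mul, norm_pow, norm_neg, norm_one, one_pow, one_mul, norm_pow, norm_mul,
      RCLike.norm_natCast, Real.norm_eq_abs, Real.norm_eq_abs, ← (even_two_mul m).pow_abs z]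
    gcongr
    exact mul_le_of_le_one_right (abs_nonneg z) (abs_sin_le_one θ)

theorem abs_tsum_neg_pow_div_factorial_sq_le_one {x : ℝ} (hx : 0 ≤ x) :
    |∑' k : ℕ, (-x) ^ k / (k ! : ℝ) ^ 2| ≤ 1 := by
  have hsum := hasSum_integral_cos_mul_sin (2 * √x)
  have hz : (2 * √x) ^ 2 / 4 = x := by rw [mul_pow, sq_sqrt hx]; ring
  rw [hz] at hsum
  have hbound : |∫ θ in 0..π, cos (2 * √x * sin θ)| ≤ π := by
    simpa [abs_of_pos pi_pos] using
      intervalIntegral.norm_integral_le_of_norm_le_const (a := 0) (b := π)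
        (f := fun θ => cos (2 * √x * sin θ)) (C := 1) (fun θ _ => abs_cos_le_one _)
  rw [← hsum.tsum_eq, tsum_mul_left, abs_mul, abs_of_pos pi_pos] at hbound
  exact le_of_mul_le_mul_left (by simpa using hbound) pi_pos

theorem integral_exp_neg (y : ℝ) : ∫ t in 0..y, exp (-t) = 1 - exp (-y) := by
  simp [intervalIntegral.integral_comp_neg]

theorem integral_sub_pow_succ_mul_exp_neg (y : ℝ) (k : ℕ) :
    ∫ t in 0..y, (y - t) ^ (k + 1) * exp (-t) =
      y ^ (k + 1) - (k + 1) * ∫ t in 0..y, (y - t) ^ k * exp (-t) := by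
  have hu (t : ℝ) : HasDerivAt (fun s => (y - s) ^ (k + 1)) (-((k + 1) * (y - t) ^ k)) t := by
    simpa using ((hasDerivAt_id t).const_sub y).fun_pow (k + 1)
  have hv (t : ℝ) : HasDerivAt (fun s => -exp (-s)) (exp (-t)) t := by
    simpa using ((hasDerivAt_neg t).exp).fun_neg
  rw [intervalIntegral.integral_mul_deriv_eq_deriv_mul (fun t _ => hu t) (fun t _ => hv t)
    ((by fun_prop : Continuous _).intervalIntegrable _ _)
    ((by fun_prop : Continuous _).intervalIntegrable _ _)]
  have h (t : ℝ) : -((k + 1) * (y - t) ^ k) * -exp (-t) = (k + 1) * ((y - t) ^ k * exp (-t)) := by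
    ring
  simp [h, intervalIntegral.integral_const_mul]

theorem exp_neg_sub_sum_range_succ (y : ℝ) (k : ℕ) :
    exp (-y) - ∑ i ∈ range (k + 1), (-y) ^ i / i ! =
      (-1) ^ (k + 1) / k ! * ∫ t in 0..y, (y - t) ^ k * exp (-t) := by
  induction k with
  | zero => simp
  | succ k ih =>
    rw [sum_range_succ, integral_sub_pow_succ_mul_exp_neg, factorial_succ, neg_pow y]
    rw [sub_eq_iff_eq_add'.mp ih]
    push_cast
    field_simp
    ring

theorem poissonMeasure_real_setOf_le (r : ℝ≥0) (i : ℕ) :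
    (poissonMeasure r).real {k | i ≤ k} = ∑' k, if i ≤ k then exp (-r) * r ^ k / k ! else 0 := by
  rw [← integral_indicator_one (measurableSet_setOfPred.mpr .of_discrete),
    integral_poissonMeasure]
  congr with k
  by_cases hik : i ≤ k <;> simp [hik]

theorem hasSum_mul_sum_range_succ {p a : ℕ → ℝ} (hp : Summable (‖p ·‖)) (ha : Summable (‖a ·‖)) :
    HasSum (fun k => p k * ∑ i ∈ range (k + 1), a i)
      (∑' i, (∑' k, if i ≤ k then p k else 0) * a i) := by
  set F : ℕ → ℕ → ℝ := fun k i => if i ≤ k then p k * a i else 0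
  have hF : Summable (Function.uncurry F) := by
    refine (hp.mul_norm ha).of_norm_bounded fun q => ?_
    simp only [Function.uncurry, F]
    split_ifs <;> simp only [norm_zero, norm_nonneg, le_refl]
  have hrow (k : ℕ) : HasSum (F k) (p k * ∑ i ∈ range (k + 1), a i) := by
    have hsum : p k * ∑ i ∈ range (k + 1), a i = ∑ i ∈ range (k + 1), F k i := by
      rw [mul_sum]
      exact sum_congr rfl fun i hi => by simp [F, Nat.lt_succ_iff.mp (mem_range.mp hi)]
    rw [hsum]
    exact hasSum_sum_of_ne_finset_zero fun i hi => by simp_all [F]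
  have hcol (i : ℕ) : ∑' k, F k i = (∑' k, if i ≤ k then p k else 0) * a i := by
    rw [← tsum_mul_right]
    congr with k
    split_ifs <;> simp [F, *]
  have := hF.hasSum.prod_fiberwise hrow
  rw [hF.tsum_prod] at this
  simp only [Function.uncurry_apply_pair] at this
  rwa [← hF.tsum_comm, tsum_congr hcol] at this

theorem summable_pow_div_factorial_sq (x : ℝ) : Summable fun k : ℕ => x ^ k / (k ! : ℝ) ^ 2 := by
  refine (Real.summable_pow_div_factorial |x|).of_norm_bounded fun k => ?_
  have hk : (1 : ℝ) ≤ k ! := mod_cast k.factorial_pos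
  rw [norm_div, norm_pow, Real.norm_eq_abs, norm_pow, RCLike.norm_natCast, sq]
  exact div_le_div_of_nonneg_left (by positivity) (by positivity)
    (le_mul_of_one_le_right (by positivity) hk)

theorem hasSum_mul_exp_neg_sub_sum_range_succ (r : ℝ) {y : ℝ} (hy : 0 ≤ y) :
    HasSum (fun k : ℕ => exp (-r) * r ^ k / k ! * (exp (-y) - ∑ i ∈ range (k + 1), (-y) ^ i / i !))
      (-exp (-r) * ∫ t in 0..y, exp (-t) * ∑' k : ℕ, (-(r * (y - t))) ^ k / (k ! : ℝ) ^ 2) := by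
  set F : ℕ → ℝ → ℝ := fun k t =>
    exp (-r) * r ^ k / k ! * ((-1) ^ (k + 1) / k ! * ((y - t) ^ k * exp (-t)))
  have hF (k : ℕ) : ∫ t in 0..y, F k t =
      exp (-r) * r ^ k / k ! * (exp (-y) - ∑ i ∈ range (k + 1), (-y) ^ i / i !) := by
    simp only [F, intervalIntegral.integral_const_mul, exp_neg_sub_sum_range_succ]
  simp_rw [← hF, ← intervalIntegral.integral_const_mul]
  refine intervalIntegral.hasSum_integral_of_summable_bound (fun k => by fun_prop)
    ((Real.summable_pow_div_factorial (|r| * y)).mul_left (exp (-r))) (fun k t ht => ?_)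
    (fun t _ => ?_)
  · rw [Set.uIoc_of_le hy] at ht
    have hyt : 0 ≤ y - t := sub_nonneg.mpr ht.2
    have hty : y - t ≤ y := by linarith [ht.1]
    have hexp : exp (-t) ≤ 1 := exp_le_one_iff.mpr (by linarith [ht.1])
    have hk : 1 / (k ! : ℝ) ≤ 1 := (div_le_one₀ (by positivity)).mpr (mod_cast k.factorial_pos)
    simp only [F, norm_mul, norm_div, norm_pow, norm_neg, norm_one, one_pow, Real.norm_eq_abs,
      abs_exp, RCLike.norm_natCast, abs_of_nonneg hyt]
    calc _ ≤ exp (-r) * |r| ^ k / k ! * (1 * (y ^ k * 1)) := by gcongr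
      _ = _ := by ring
  · have hterm (k : ℕ) :
        F k t = -exp (-r) * exp (-t) * ((-(r * (y - t))) ^ k / (k ! : ℝ) ^ 2) := by
      simp only [F, neg_pow (r * (y - t)), mul_pow]
      field_simp
      ring
    simp only [hterm, ← mul_assoc]
    exact (summable_pow_div_factorial_sq _).hasSum.mul_left _

theorem abs_integral_exp_neg_mul_tsum_le {r y : ℝ} (hr : 0 ≤ r) (hy : 0 ≤ y) :
    |∫ t in 0..y, exp (-t) * ∑' k : ℕ, (-(r * (y - t))) ^ k / (k ! : ℝ) ^ 2| ≤ 1 - exp (-y) := by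
  rw [← integral_exp_neg, ← Real.norm_eq_abs]
  refine intervalIntegral.norm_integral_le_of_norm_le (g := fun t => exp (-t)) hy
    (ae_of_all volume fun t ht => ?_) ((by fun_prop : Continuous _).intervalIntegrable _ _)
  rw [norm_mul, Real.norm_eq_abs, abs_exp]
  refine mul_le_of_le_one_right (exp_pos _).le (abs_tsum_neg_pow_div_factorial_sq_le_one ?_)
  exact mul_nonneg hr (sub_nonneg.mpr ht.2)

theorem smoothed_alternating_series_bound_general (r : ℝ≥0) (y : ℝ) (hy : 0 < y) :
    |-∑' i : ℕ, (poissonMeasure r {k | i ≤ k}).toReal / (Nat.factorial i : ℝ) * (-y) ^ i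
        + Real.exp (-y)|
      ≤ Real.exp (-(r : ℝ)) * (1 - Real.exp (-y)) := by
  have hp := hasSum_one_poissonMeasure r
  have hseries : HasSum
      (fun k : ℕ => exp (-r) * r ^ k / k ! * (exp (-y) - ∑ i ∈ range (k + 1), (-y) ^ i / i !))
      (exp (-y) -
        ∑' i, (∑' k, if i ≤ k then exp (-r) * r ^ k / k ! else 0) * ((-y) ^ i / i !)) := by
    have := (hp.mul_right (exp (-y))).sub <| hasSum_mul_sum_range_succ
      (summable_norm_iff.mpr hp.summable)
      (summable_norm_iff.mpr (Real.summable_pow_div_factorial (-y)))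
    rw [one_mul] at this
    simpa only [mul_sub] using this
  have hterm (i : ℕ) : (poissonMeasure r {k | i ≤ k}).toReal / i ! * (-y) ^ i =
      (∑' k, if i ≤ k then exp (-r) * r ^ k / k ! else 0) * ((-y) ^ i / i !) := by
    rw [← measureReal_def, poissonMeasure_real_setOf_le]; ring
  rw [tsum_congr hterm, neg_add_eq_sub,
    hseries.unique (hasSum_mul_exp_neg_sub_sum_range_succ r hy.le), abs_mul, abs_neg, abs_exp]
  exact mul_le_mul_of_nonneg_left (abs_integral_exp_neg_mul_tsum_le r.coe_nonneg hy.le)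
    (exp_pos _).le

/-- **Smoothed alternating-series approximation to the exponential**: for every `y > 0`
and `r > 0`, if `L ~ Poisson(r)`, then
`|−∑_{i=0}^∞ (P(L ≥ i)/i!)(−y)^i + e^{−y}| ≤ e^{−r}(1 − e^{−y})`. -/
theorem smoothed_alternating_series_bound (r : ℝ≥0) (hr : 0 < r) (y : ℝ) (hy : 0 < y) :
    |-∑' i : ℕ, (poissonMeasure r {k | i ≤ k}).toReal / (Nat.factorial i : ℝ) * (-y) ^ i
        + Real.exp (-y)|
      ≤ Real.exp (-(r : ℝ)) * (1 - Real.exp (-y)) :=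
  smoothed_alternating_series_bound_general r y hy
end
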